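/- For every odd positive integer α, the rational-number identity ∑_{i=0}^{α} C(α,i)(-1)^i [ C(i - 1 - α/2, α)·3^{2i} + C(i - (α+1)/2, α)·3^{2i+1} ] = 0 holds, where C(x,α) is the generalized binomial coefficient for rational x. Moreover this identity is equivalent to the identity ∑_i C(α,i)(-1)^i[C(i+(α-1)/2, α)(1/3)^{2i} + C(i+α/2, α)(1/3)^{2i+1}] = 0. -/

import Mathlib

/-!
Writing `C(x + i, α)` as the `X^α`-coefficient of `(1 + X)^(x + i)`, the sum becomes the
`X^α`-coefficient of `((1 + X)^(-(α+2)/2) + 3 (1 + X)^(-(α+1)/2)) (1 - 9 (1 + X))^α`.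
Coefficient extraction is a residue, so it may be computed after any change of variables
`X = Y u(Y)` with `u(0)` invertible. Substituting `X = Y (2 + Y)`, i.e. `1 + X = (1 + Y)^2`,
removes the square roots and leaves the residue at `0` of a rational function
`F(Y) dY / Y^(α+1)`, with `F` a constant multiple of
`(2+3Y)^α (4+3Y)^(α+1) / ((1+Y)^(α+1) (2+Y)^(α+1))`.
The Möbius involution `Y ↦ -2Y / (2 + 3Y)` fixes `0` and pulls this form back to `(-1)^α` times
itself, so for odd `α` the residue vanishes.

The second identity is the first one read backwards: `i ↦ α - i` together with
`C(α - 1 - x, α) = -C(x, α)` for odd `α`.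
-/

/-- Generalized binomial coefficient `C(x, n) = x(x-1)⋯(x-n+1)/n!` for `x ∈ ℚ`. -/
noncomputable def gchoose (x : ℚ) (n : ℕ) : ℚ :=
  (descPochhammer ℚ n).eval x / (n.factorial : ℚ)

open PowerSeries

namespace PowerSeries

@[simp]
theorem derivative_ofNat {R : Type*} [CommSemiring R] (n : ℕ) [n.AtLeastTwo] :
    d⁄dX R (no_index (OfNat.ofNat n : R⟦X⟧)) = 0 := by
  rw [← Nat.cast_ofNat, Derivation.map_natCast]

theorem derivative_eq_neg_sq_mul_of_mul_eq_one {R : Type*} [CommRing R] {u v : R⟦X⟧}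
    (huv : u * v = 1) : d⁄dX R v = -(v ^ 2 * d⁄dX R u) := by
  have h := congrArg (d⁄dX R) huv
  rw [Derivation.leibniz, derivative_one, smul_eq_mul, smul_eq_mul] at h
  linear_combination v * h - d⁄dX R v * huv

theorem binomialSeries_pow {R A : Type*} [CommRing R] [BinomialRing R] [CommRing A] [Algebra R A]
    (r : R) (k : ℕ) : binomialSeries A r ^ k = binomialSeries A (k * r) := by
  induction k with
  | zero => simp
  | succ k ih => rw [pow_succ, ih, ← binomialSeries_add]; push_cast; ring_nf

theorem coeff_binomialSeries_mul_pow {R : Type*} [CommRing R] [BinomialRing R]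
    (a y : R) (N m : ℕ) :
    coeff m (binomialSeries R a * (1 + C y * (1 + X)) ^ N) =
      ∑ i ∈ Finset.range (N + 1), (N.choose i : R) * y ^ i * Ring.choose (a + i) m := by
  rw [add_comm (1 : R⟦X⟧), add_pow, Finset.mul_sum, map_sum]
  refine Finset.sum_congr rfl fun i _ ↦ ?_
  rw [one_pow, mul_one, mul_pow, ← map_pow, ← binomialSeries_nat (R := R),
    show binomialSeries R a * (C (y ^ i) * binomialSeries R (i : R) * (N.choose i : R⟦X⟧)) =
        C ((N.choose i : R) * y ^ i) * (binomialSeries R a * binomialSeries R (i : R)) by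
      rw [map_mul, map_natCast]; ring,
    coeff_C_mul, ← binomialSeries_add, binomialSeries_coeff, smul_eq_mul, mul_one]

section ChangeOfVariables

variable {K : Type*} [Field K] [CharZero K] {u v : K⟦X⟧}

theorem coeff_pow_succ_mul_derivative_X_mul (huv : u * v = 1) (m : ℕ) :
    coeff m (v ^ (m + 1) * d⁄dX K (X * u)) = if m = 0 then 1 else 0 := by
  have hsplit : v ^ (m + 1) * d⁄dX K (X * u) = v ^ m + X * (v ^ (m + 1) * d⁄dX K u) := by
    rw [Derivation.leibniz, derivative_X, smul_eq_mul, smul_eq_mul]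
    linear_combination v ^ m * huv
  rw [hsplit]
  rcases m with _ | k
  · simp
  -- `v^(k+1) + X v^(k+2) u'` is `v^(k+1) - X (v^(k+1))' / (k+1)`: no `X^(k+1)`-coefficient.
  · have hder : d⁄dX K (v ^ (k + 1)) = -(C ((k : K) + 1) * (v ^ (k + 2) * d⁄dX K u)) := by
      rw [derivative_pow, derivative_eq_neg_sq_mul_of_mul_eq_one huv, map_add, map_natCast,
        map_one]
      push_cast; ring
    have h := coeff_derivative (v ^ (k + 1)) k
    rw [hder, map_neg, coeff_C_mul] at h
    rw [map_add, coeff_succ_X_mul, if_neg k.succ_ne_zero]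
    apply mul_right_cancel₀ (Nat.cast_add_one_ne_zero k : (k : K) + 1 ≠ 0)
    linear_combination -h

theorem coeff_X_mul_pow_mul_derivative (huv : u * v = 1) {i n : ℕ} (hi : i ≤ n) :
    coeff n ((X * u) ^ i * d⁄dX K (X * u) * v ^ (n + 1)) = if i = n then 1 else 0 := by
  obtain ⟨m, rfl⟩ := Nat.exists_eq_add_of_le hi
  have h : (X * u) ^ i * d⁄dX K (X * u) * v ^ (i + m + 1) =
      X ^ i * (v ^ (m + 1) * d⁄dX K (X * u)) := by
    calc (X * u) ^ i * d⁄dX K (X * u) * v ^ (i + m + 1)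
        = X ^ i * (u * v) ^ i * (v ^ (m + 1) * d⁄dX K (X * u)) := by ring
      _ = X ^ i * (v ^ (m + 1) * d⁄dX K (X * u)) := by rw [huv, one_pow, mul_one]
  rw [h, coeff_X_pow_mul', if_pos (Nat.le_add_right i m), Nat.add_sub_cancel_left,
    coeff_pow_succ_mul_derivative_X_mul huv]
  simp

/-- Invariance of the residue of `g(X) dX / X^(n+1)` under the change of variables `X = Y u(Y)`. -/
theorem coeff_subst_X_mul_mul_derivative (huv : u * v = 1) (g : K⟦X⟧) (n : ℕ) :
    coeff n (g.subst (X * u) * d⁄dX K (X * u) * v ^ (n + 1)) = coeff n g := by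
  have hφ : HasSubst (X * u) := HasSubst.of_constantCoeff_zero' (by simp)
  set w := d⁄dX K (X * u) * v ^ (n + 1)
  have htail :
      coeff n ((X ^ (n + 1) * mk fun i ↦ coeff (i + (n + 1)) g).subst (X * u) * w) = 0 := by
    rw [subst_mul hφ, subst_pow hφ, subst_X hφ, mul_pow, mul_assoc, mul_assoc,
      coeff_X_pow_mul', if_neg (by omega)]
  have htrunc : coeff n ((trunc (n + 1) g : K⟦X⟧).subst (X * u) * w) = coeff n g := by
    rw [subst_coe hφ, Polynomial.aeval_eq_sum_range' (natDegree_trunc_lt g n), Finset.sum_mul,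
      map_sum]
    rw [Finset.sum_congr rfl fun i hi ↦ by
      rw [smul_mul_assoc, coeff_smul, ← mul_assoc,
        coeff_X_mul_pow_mul_derivative huv (Nat.lt_succ_iff.mp (Finset.mem_range.mp hi)),
        coeff_trunc, if_pos (Finset.mem_range.mp hi), smul_eq_mul, mul_ite, mul_one, mul_zero]]
    simp
  rw [mul_assoc]
  conv_lhs => rw [eq_X_pow_mul_shift_add_trunc (n + 1) g]
  rw [subst_add hφ, add_mul, map_add, htail, zero_add, htrunc]

end ChangeOfVariables

end PowerSeries

theorem gchoose_eq_choose (x : ℚ) (n : ℕ) : gchoose x n = Ring.choose x n := by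
  rw [Ring.choose_eq_smul, gchoose, smul_eq_mul, div_eq_inv_mul,
    ← descPochhammer_map (algebraMap ℤ ℚ), Polynomial.eval_map_algebraMap,
    Polynomial.aeval_eq_smeval]

theorem gchoose_sub_one_sub {n : ℕ} (hn : Odd n) (x : ℚ) :
    gchoose (n - 1 - x) n = -gchoose x n := by
  rw [gchoose_eq_choose, gchoose_eq_choose, show (n : ℚ) - 1 - x = -(x - n + 1) by ring,
    Ring.choose_neg, show x - n + 1 + n - 1 = x by ring,
    Int.negOnePow_odd _ (by exact_mod_cast hn)]
  simp

theorem sum_eq_pow_mul_sum_inv {α : ℕ} (hα : Odd α) {z : ℚ} (hz : z ≠ 0) :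
    ∑ i ∈ Finset.range (α + 1), (α.choose i : ℚ) * (-1) ^ i *
        (gchoose ((i : ℚ) - 1 - (α : ℚ) / 2) α * z ^ (2 * i) +
          gchoose ((i : ℚ) - ((α : ℚ) + 1) / 2) α * z ^ (2 * i + 1)) =
      z ^ (2 * α + 1) * ∑ i ∈ Finset.range (α + 1), (α.choose i : ℚ) * (-1) ^ i *
        (gchoose ((i : ℚ) + ((α : ℚ) - 1) / 2) α * (1 / z) ^ (2 * i) +
          gchoose ((i : ℚ) + (α : ℚ) / 2) α * (1 / z) ^ (2 * i + 1)) := by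
  rw [← Finset.sum_range_reflect, Finset.mul_sum]
  refine Finset.sum_congr rfl fun i hi ↦ ?_
  obtain ⟨j, rfl⟩ := Nat.exists_eq_add_of_le (Nat.lt_succ_iff.mp (Finset.mem_range.mp hi))
  have hsign : (-1 : ℚ) ^ j = -(-1) ^ i := by
    have h : (-1 : ℚ) ^ (i + j) = -1 := hα.neg_one_pow
    rw [pow_add] at h
    rcases neg_one_pow_eq_or ℚ i with hi | hi <;> rw [hi] at h ⊢ <;> linarith
  rw [show i + j + 1 - 1 - i = j by omega, Nat.choose_symm_add, hsign,
    show ((j : ℕ) : ℚ) - 1 - ((i + j : ℕ) : ℚ) / 2 =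
      ((i + j : ℕ) : ℚ) - 1 - (i + ((i + j : ℕ) : ℚ) / 2) by push_cast; ring,
    show ((j : ℕ) : ℚ) - (((i + j : ℕ) : ℚ) + 1) / 2 =
      ((i + j : ℕ) : ℚ) - 1 - (i + (((i + j : ℕ) : ℚ) - 1) / 2) by push_cast; ring,
    gchoose_sub_one_sub hα, gchoose_sub_one_sub hα]
  simp only [one_div, inv_pow]
  field_simp
  ring

section SquareSubstitution

theorem constantCoeff_X_mul_two_add_X : constantCoeff (X * (2 + X) : ℚ⟦X⟧) = 0 := by simp

theorem hasSubst_X_mul_two_add_X : HasSubst (X * (2 + X) : ℚ⟦X⟧) :=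
  HasSubst.of_constantCoeff_zero' constantCoeff_X_mul_two_add_X

theorem subst_X_mul_two_add_X_one_add_X :
    (1 + X : ℚ⟦X⟧).subst (X * (2 + X) : ℚ⟦X⟧) = (1 + X) ^ 2 := by
  rw [← coe_substAlgHom hasSubst_X_mul_two_add_X, map_add, map_one, substAlgHom_X]
  ring

theorem subst_X_mul_two_add_X_binomialSeries_half :
    (PowerSeries.binomialSeries ℚ (1 / 2 : ℚ)).subst (X * (2 + X) : ℚ⟦X⟧) =
      (1 + X : ℚ⟦X⟧) := by
  set w := (PowerSeries.binomialSeries ℚ (1 / 2 : ℚ)).subst (X * (2 + X) : ℚ⟦X⟧)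
  have hsq : w ^ 2 = (1 + X) ^ 2 := by
    rw [← subst_pow hasSubst_X_mul_two_add_X, binomialSeries_pow,
      show ((2 : ℕ) : ℚ) * (1 / 2) = ((1 : ℕ) : ℚ) by norm_num, binomialSeries_nat, pow_one,
      subst_X_mul_two_add_X_one_add_X]
  have hc : constantCoeff w = 1 := by
    have h := constantCoeff_subst_eq_zero constantCoeff_X_mul_two_add_X
      (PowerSeries.binomialSeries ℚ (1 / 2 : ℚ) - 1) (by simp)
    rwa [← coe_substAlgHom hasSubst_X_mul_two_add_X, map_sub, map_one, map_sub, map_one,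
      sub_eq_zero, coe_substAlgHom] at h
  rcases sq_eq_sq_iff_eq_or_eq_neg.mp hsq with h | h
  · exact h
  · have h0 := congrArg constantCoeff h
    rw [hc] at h0
    norm_num at h0

theorem subst_X_mul_two_add_X_binomialSeries_neg_half_mul (k : ℕ) :
    (PowerSeries.binomialSeries ℚ (-(k / 2) : ℚ)).subst (X * (2 + X) : ℚ⟦X⟧) * (1 + X) ^ k =
      1 := by
  rw [← subst_X_mul_two_add_X_binomialSeries_half, ← subst_pow hasSubst_X_mul_two_add_X,
    ← subst_mul hasSubst_X_mul_two_add_X, binomialSeries_pow, ← binomialSeries_add,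
    ← coe_substAlgHom hasSubst_X_mul_two_add_X]
  ring_nf
  rw [binomialSeries_zero, map_one]

end SquareSubstitution

section MobiusInvolution

local notation "L" => (2 + 3 * X : ℚ⟦X⟧)

theorem two_add_three_mul_X_mul_inv : L * L⁻¹ = 1 :=
  PowerSeries.mul_inv_cancel _ (by simp [map_ofNat])

noncomputable def mobiusInvolution : ℚ⟦X⟧ := X * (C (-2) * L⁻¹)

theorem hasSubst_mobiusInvolution : HasSubst mobiusInvolution :=
  HasSubst.of_constantCoeff_zero' (by simp [mobiusInvolution])

theorem two_add_three_mul_X_mul_mobiusInvolution : L * mobiusInvolution = -2 * X := by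
  rw [mobiusInvolution, map_neg, map_ofNat]
  linear_combination (-2 * X) * two_add_three_mul_X_mul_inv

theorem derivative_mobiusInvolution_mul_sq : d⁄dX ℚ mobiusInvolution * L ^ 2 = -4 := by
  have hd := derivative_eq_neg_sq_mul_of_mul_eq_one two_add_three_mul_X_mul_inv
  rw [mobiusInvolution, Derivation.leibniz, derivative_X, smul_eq_mul, smul_eq_mul,
    Derivation.leibniz, derivative_C, hd, show d⁄dX ℚ L = 3 by simp, map_neg, map_ofNat]
  linear_combination (6 * X * (L * L⁻¹ + 1) - 2 * L) * two_add_three_mul_X_mul_inv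

theorem mobiusInvolution_pullback (n : ℕ) (F : ℚ⟦X⟧) (c : ℚ)
    (hF : F * ((1 + X) ^ (n + 1) * (2 + X) ^ (n + 1)) = C c * ((4 + 3 * X) ^ (n + 1) * L ^ n)) :
    F.subst mobiusInvolution * d⁄dX ℚ mobiusInvolution * (C (-1 / 2) * L) ^ (n + 1) =
      (-1) ^ n * F := by
  set ψ := mobiusInvolution
  have hψ := two_add_three_mul_X_mul_mobiusInvolution
  have hFψ : F.subst ψ * ((1 + ψ) ^ (n + 1) * (2 + ψ) ^ (n + 1)) =
      C c * ((4 + 3 * ψ) ^ (n + 1) * (2 + 3 * ψ) ^ n) := by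
    have h := congrArg (substAlgHom (R := ℚ) hasSubst_mobiusInvolution) hF
    simp only [map_mul, map_pow, map_add, map_one, map_ofNat, substAlgHom_X] at h
    rw [← algebraMap_eq, AlgHom.commutes] at h
    rwa [← coe_substAlgHom hasSubst_mobiusInvolution]
  have hDψ : (1 + ψ) ^ (n + 1) * (2 + ψ) ^ (n + 1) * L ^ (2 * n + 2) =
      4 ^ (n + 1) * ((1 + X) ^ (n + 1) * (2 + X) ^ (n + 1)) := by
    calc _ = ((1 + ψ) * L) ^ (n + 1) * ((2 + ψ) * L) ^ (n + 1) := by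
          rw [mul_pow, mul_pow]; ring
      _ = (2 + X) ^ (n + 1) * (4 * (1 + X)) ^ (n + 1) := by
          rw [show (1 + ψ) * L = 2 + X by linear_combination hψ,
            show (2 + ψ) * L = 4 * (1 + X) by linear_combination hψ]
      _ = _ := by rw [mul_pow]; ring
  have hMψ : (4 + 3 * ψ) ^ (n + 1) * (2 + 3 * ψ) ^ n * L ^ (3 * n + 1) =
      2 ^ (n + 1) * 4 ^ n * ((4 + 3 * X) ^ (n + 1) * L ^ n) := by
    calc _ = ((4 + 3 * ψ) * L) ^ (n + 1) * ((2 + 3 * ψ) * L) ^ n * L ^ n := by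
          rw [mul_pow, mul_pow]; ring
      _ = (2 * (4 + 3 * X)) ^ (n + 1) * 4 ^ n * L ^ n := by
          rw [show (4 + 3 * ψ) * L = 2 * (4 + 3 * X) by linear_combination 3 * hψ,
            show (2 + 3 * ψ) * L = 4 by linear_combination 3 * hψ]
      _ = _ := by rw [mul_pow]; ring
  have hhalf : C (-1 / 2 : ℚ) * 2 = -1 := by
    rw [← map_ofNat C 2, ← map_mul]; norm_num
  have hD : (1 + X : ℚ⟦X⟧) ^ (n + 1) * (2 + X) ^ (n + 1) * 4 ^ (n + 1) ≠ 0 := fun h ↦ by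
    simpa [map_ofNat] using congrArg constantCoeff h
  apply mul_right_cancel₀ hD
  calc F.subst ψ * d⁄dX ℚ ψ * (C (-1 / 2) * L) ^ (n + 1) *
        ((1 + X) ^ (n + 1) * (2 + X) ^ (n + 1) * 4 ^ (n + 1))
      = F.subst ψ * ((1 + ψ) ^ (n + 1) * (2 + ψ) ^ (n + 1)) * (d⁄dX ℚ ψ * L ^ 2) *
          C (-1 / 2) ^ (n + 1) * L ^ (3 * n + 1) := by
        rw [mul_comm _ (4 ^ (n + 1)), ← hDψ, mul_pow]; ring
    _ = C c * ((4 + 3 * ψ) ^ (n + 1) * (2 + 3 * ψ) ^ n * L ^ (3 * n + 1)) * (-4) *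
          C (-1 / 2) ^ (n + 1) := by
        rw [hFψ, derivative_mobiusInvolution_mul_sq]; ring
    _ = C c * ((4 + 3 * X) ^ (n + 1) * L ^ n) * (-4) * 4 ^ n * (C (-1 / 2) * 2) ^ (n + 1) := by
        rw [hMψ, mul_pow]; ring
    _ = (-1) ^ n * F * ((1 + X) ^ (n + 1) * (2 + X) ^ (n + 1) * 4 ^ (n + 1)) := by
        rw [hhalf, ← hF]; ring

theorem coeff_eq_zero_of_mul_eq_of_odd {n : ℕ} (hn : Odd n) (F : ℚ⟦X⟧) (c : ℚ)
    (hF : F * ((1 + X) ^ (n + 1) * (2 + X) ^ (n + 1)) = C c * ((4 + 3 * X) ^ (n + 1) * L ^ n)) :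
    coeff n F = 0 := by
  have huv : C (-2) * L⁻¹ * (C (-1 / 2) * L) = 1 := by
    rw [mul_mul_mul_comm, ← map_mul, mul_comm _ L, two_add_three_mul_X_mul_inv]; norm_num
  have h := coeff_subst_X_mul_mul_derivative huv F n
  rw [← mobiusInvolution, mobiusInvolution_pullback n F c hF, hn.neg_one_pow, neg_one_mul,
    map_neg] at h
  linarith

end MobiusInvolution

noncomputable def identitySeries (n : ℕ) : ℚ⟦X⟧ :=
  (PowerSeries.binomialSeries ℚ (-((n + 2 : ℕ) / 2 : ℚ)) +
      C 3 * PowerSeries.binomialSeries ℚ (-((n + 1 : ℕ) / 2 : ℚ))) *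
    (1 + C (-9) * (1 + X)) ^ n

theorem sum_eq_coeff_identitySeries (α : ℕ) :
    ∑ i ∈ Finset.range (α + 1), (α.choose i : ℚ) * (-1) ^ i *
        (gchoose ((i : ℚ) - 1 - (α : ℚ) / 2) α * (3 : ℚ) ^ (2 * i) +
          gchoose ((i : ℚ) - ((α : ℚ) + 1) / 2) α * (3 : ℚ) ^ (2 * i + 1)) =
      coeff α (identitySeries α) := by
  rw [identitySeries, add_mul, map_add, mul_assoc (C 3), coeff_C_mul,
    coeff_binomialSeries_mul_pow, coeff_binomialSeries_mul_pow, Finset.mul_sum,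
    ← Finset.sum_add_distrib]
  refine Finset.sum_congr rfl fun i _ ↦ ?_
  rw [gchoose_eq_choose, gchoose_eq_choose, pow_succ, pow_mul, neg_pow (9 : ℚ),
    show -(((α + 2 : ℕ) : ℚ) / 2) + i = i - 1 - α / 2 by push_cast; ring,
    show -(((α + 1 : ℕ) : ℚ) / 2) + i = i - (α + 1) / 2 by push_cast; ring]
  ring

theorem subst_X_mul_two_add_X_identitySeries_mul (n : ℕ) :
    (identitySeries n).subst (X * (2 + X) : ℚ⟦X⟧) * (1 + X) ^ (n + 2) =
      (-1) ^ n * ((4 + 3 * X) ^ (n + 1) * (2 + 3 * X) ^ n) := by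
  have h1 := subst_X_mul_two_add_X_binomialSeries_neg_half_mul (n + 2)
  have h2 := subst_X_mul_two_add_X_binomialSeries_neg_half_mul (n + 1)
  rw [← coe_substAlgHom hasSubst_X_mul_two_add_X] at h1 h2 ⊢
  simp only [identitySeries, map_mul, map_add, map_pow, map_one, substAlgHom_X, ← algebraMap_eq,
    AlgHom.commutes]
  rw [algebraMap_eq, map_ofNat, map_neg, map_ofNat,
    show 1 + -9 * (1 + X * (2 + X)) = -((2 + 3 * X) * (4 + 3 * X) : ℚ⟦X⟧) by ring, neg_pow,
    mul_pow]
  linear_combination ((-1) ^ n * (2 + 3 * X) ^ n * (4 + 3 * X) ^ n) * h1 +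
    (3 * (1 + X) * (-1) ^ n * (2 + 3 * X) ^ n * (4 + 3 * X) ^ n) * h2

theorem coeff_identitySeries_eq_zero {n : ℕ} (hn : Odd n) : coeff n (identitySeries n) = 0 := by
  have huv : (2 + X : ℚ⟦X⟧) * (2 + X)⁻¹ = 1 :=
    PowerSeries.mul_inv_cancel _ (by simp [map_ofNat])
  rw [← coeff_subst_X_mul_mul_derivative huv]
  apply coeff_eq_zero_of_mul_eq_of_odd hn _ (2 * (-1) ^ n)
  rw [show d⁄dX ℚ (X * (2 + X)) = 2 * (1 + X) by simp; ring]
  calc _ = (identitySeries n).subst (X * (2 + X) : ℚ⟦X⟧) * (1 + X) ^ (n + 2) * 2 *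
        ((2 + X) * (2 + X)⁻¹) ^ (n + 1) := by rw [mul_pow]; ring
    _ = _ := by
      rw [subst_X_mul_two_add_X_identitySeries_mul, huv, one_pow, map_mul, map_pow, map_neg,
        map_one, map_ofNat]
      ring

/-- For every odd positive `α`,
`∑_{i=0}^{α} C(α,i)(-1)^i [ C(i-1-α/2, α)·3^{2i} + C(i-(α+1)/2, α)·3^{2i+1} ] = 0`,
and this identity is equivalent to
`∑_i C(α,i)(-1)^i [ C(i+(α-1)/2, α)(1/3)^{2i} + C(i+α/2, α)(1/3)^{2i+1} ] = 0`. -/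
theorem identity_z_eq_three :
    (∀ α : ℕ, Odd α → 0 < α →
      ∑ i ∈ Finset.range (α + 1), (α.choose i : ℚ) * (-1) ^ i *
        (gchoose ((i : ℚ) - 1 - (α : ℚ) / 2) α * (3 : ℚ) ^ (2 * i) +
          gchoose ((i : ℚ) - ((α : ℚ) + 1) / 2) α * (3 : ℚ) ^ (2 * i + 1)) = 0) ∧
    (∀ α : ℕ, Odd α → 0 < α →
      ((∑ i ∈ Finset.range (α + 1), (α.choose i : ℚ) * (-1) ^ i *
        (gchoose ((i : ℚ) - 1 - (α : ℚ) / 2) α * (3 : ℚ) ^ (2 * i) +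
          gchoose ((i : ℚ) - ((α : ℚ) + 1) / 2) α * (3 : ℚ) ^ (2 * i + 1)) = 0) ↔
       (∑ i ∈ Finset.range (α + 1), (α.choose i : ℚ) * (-1) ^ i *
        (gchoose ((i : ℚ) + ((α : ℚ) - 1) / 2) α * (1 / 3 : ℚ) ^ (2 * i) +
          gchoose ((i : ℚ) + (α : ℚ) / 2) α * (1 / 3 : ℚ) ^ (2 * i + 1)) = 0))) := by
  have hsum := fun α (hα : Odd α) ↦
    (sum_eq_coeff_identitySeries α).trans (coeff_identitySeries_eq_zero hα)
  refine ⟨fun α hα _ ↦ hsum α hα, fun α hα _ ↦ iff_of_true (hsum α hα) ?_⟩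
  have h := sum_eq_pow_mul_sum_inv hα (three_ne_zero : (3 : ℚ) ≠ 0)
  rw [hsum α hα, eq_comm, mul_eq_zero] at h
  exact h.resolve_left (by positivity)
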